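/- Fix λ₀ ∈ (0,1) and set ρ = λ₀. The function t ↦ ω(t) = λ₀·(1 - e^{-t}(t+1))/(1-e^{-t}) · (1 + λ₀²/((1-e^{-t})(1-ρ))) is strictly increasing on (0,∞). -/

import Mathlib

/-!
Writing `A t = (1 - e^{-t}(t+1)) / (1 - e^{-t})` and `c = λ₀³ / (1 - λ₀) > 0`, the waiting time is
`ω t = λ₀ A t + c A t / (1 - e^{-t})`, so it suffices that both `A` and `A / (1 - e^{-t})` are
strictly increasing. By the quotient rule the numerators of their derivatives are
`e^{-t} (t - 1 + e^{-t})` and `(1 - e^{-t}) e^{-t} (t - 2 + (t + 2) e^{-t})`. Both brackets are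
positive for `t > 0`: the first because `e^{-t} > 1 - t`, the second because it vanishes at `0`
and has derivative `1 - (t + 1) e^{-t} > 0`.
-/

open Real Set

lemma strictMonoOn_div_of_hasDerivAt {D : Set ℝ} (hD : Convex ℝ D) (hDo : IsOpen D)
    {f g f' g' : ℝ → ℝ} (hf : ∀ x ∈ D, HasDerivAt f (f' x) x) (hg : ∀ x ∈ D, HasDerivAt g (g' x) x)
    (hg₀ : ∀ x ∈ D, g x ≠ 0) (hpos : ∀ x ∈ D, 0 < f' x * g x - f x * g' x) :
    StrictMonoOn (fun x => f x / g x) D := by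
  have hdiv : ∀ x ∈ D, HasDerivAt (fun x => f x / g x)
      ((f' x * g x - f x * g' x) / g x ^ 2) x := fun x hx => (hf x hx).div (hg x hx) (hg₀ x hx)
  refine strictMonoOn_of_hasDerivWithinAt_pos (f' := fun x => (f' x * g x - f x * g' x) / g x ^ 2) hD
    (fun x hx => (hdiv x hx).continuousAt.continuousWithinAt) (fun x hx => ?_) (fun x hx => ?_)
  · rw [hDo.interior_eq] at hx ⊢
    exact (hdiv x hx).hasDerivWithinAt
  · rw [hDo.interior_eq] at hx
    exact div_pos (hpos x hx) (sq_pos_of_ne_zero (hg₀ x hx))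

lemma one_sub_exp_neg_pos {t : ℝ} (ht : 0 < t) : 0 < 1 - exp (-t) := by
  simpa using exp_lt_one_iff.2 (neg_neg_of_pos ht)

lemma hasDerivAt_exp_neg (t : ℝ) : HasDerivAt (fun t => exp (-t)) (-exp (-t)) t := by
  simpa using (hasDerivAt_neg t).exp

lemma hasDerivAt_one_sub_exp_neg (t : ℝ) : HasDerivAt (fun t => 1 - exp (-t)) (exp (-t)) t := by
  simpa using (hasDerivAt_exp_neg t).const_sub 1

lemma hasDerivAt_one_sub_exp_neg_mul_add_one (t : ℝ) :
    HasDerivAt (fun t => 1 - exp (-t) * (t + 1)) (t * exp (-t)) t :=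
  (((hasDerivAt_exp_neg t).mul ((hasDerivAt_id t).add_const 1)).const_sub 1).congr_deriv
    (by simp only [id_eq]; ring)

lemma add_exp_neg_sub_one_pos {t : ℝ} (ht : 0 < t) : 0 < t - 1 + exp (-t) := by
  linarith [add_one_lt_exp (x := -t) (by linarith)]

lemma add_add_two_mul_exp_neg_sub_two_pos {t : ℝ} (ht : 0 < t) :
    0 < t + (t + 2) * exp (-t) - 2 := by
  have hmono : StrictMonoOn (fun t => t + (t + 2) * exp (-t) - 2) (Ici 0) := by
    refine strictMonoOn_of_deriv_pos (convex_Ici 0) (by fun_prop) fun s hs => ?_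
    rw [interior_Ici] at hs
    have hderiv : HasDerivAt (fun t => t + (t + 2) * exp (-t) - 2) (1 - (s + 1) * exp (-s)) s :=
      (((hasDerivAt_id s).add (((hasDerivAt_id s).add_const 2).mul
        (hasDerivAt_exp_neg s))).sub_const 2).congr_deriv (by simp only [id_eq]; ring)
    have hlt : (s + 1) * exp (-s) < 1 := by
      rw [exp_neg, mul_inv_lt_iff₀ (exp_pos s)]
      linarith [add_one_lt_exp hs.ne']
    rw [hderiv.deriv]
    linarith
  simpa using hmono self_mem_Ici ht.le ht

lemma strictMonoOn_one_sub_exp_neg_mul_add_one_div :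
    StrictMonoOn (fun t => (1 - exp (-t) * (t + 1)) / (1 - exp (-t))) (Ioi 0) := by
  refine strictMonoOn_div_of_hasDerivAt (convex_Ioi 0) isOpen_Ioi
    (fun t _ => hasDerivAt_one_sub_exp_neg_mul_add_one t) (fun t _ => hasDerivAt_one_sub_exp_neg t)
    (fun t ht => (one_sub_exp_neg_pos ht).ne') fun t ht => ?_
  have key : t * exp (-t) * (1 - exp (-t)) - (1 - exp (-t) * (t + 1)) * exp (-t) =
      exp (-t) * (t - 1 + exp (-t)) := by ring
  rw [key]
  exact mul_pos (exp_pos _) (add_exp_neg_sub_one_pos ht)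

lemma strictMonoOn_one_sub_exp_neg_mul_add_one_div_sq :
    StrictMonoOn (fun t => (1 - exp (-t) * (t + 1)) / (1 - exp (-t)) ^ 2) (Ioi 0) := by
  refine strictMonoOn_div_of_hasDerivAt (convex_Ioi 0) isOpen_Ioi
    (fun t _ => hasDerivAt_one_sub_exp_neg_mul_add_one t)
    (fun t _ => (hasDerivAt_one_sub_exp_neg t).pow 2)
    (fun t ht => (pow_pos (one_sub_exp_neg_pos ht) 2).ne') fun t ht => ?_
  have key : t * exp (-t) * (1 - exp (-t)) ^ 2 -
      (1 - exp (-t) * (t + 1)) * ((2 : ℕ) * (1 - exp (-t)) ^ (2 - 1) * exp (-t)) =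
      (1 - exp (-t)) * exp (-t) * (t + (t + 2) * exp (-t) - 2) := by
    push_cast; ring
  rw [key]
  exact mul_pos (mul_pos (one_sub_exp_neg_pos ht) (exp_pos _))
    (add_add_two_mul_exp_neg_sub_two_pos ht)

theorem stmt_16 (lam : ℝ) (h0 : 0 < lam) (h1 : lam < 1) :
    StrictMonoOn
      (fun t : ℝ =>
        lam * (1 - Real.exp (-t) * (t + 1)) / (1 - Real.exp (-t)) *
          (1 + lam ^ 2 / ((1 - Real.exp (-t)) * (1 - lam))))
      (Set.Ioi (0:ℝ)) := by
  have hc : 0 < lam ^ 3 / (1 - lam) := by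
    have : 0 < 1 - lam := by linarith
    positivity
  have hsplit : ∀ t ∈ Ioi (0 : ℝ),
      lam * (1 - exp (-t) * (t + 1)) / (1 - exp (-t)) *
          (1 + lam ^ 2 / ((1 - exp (-t)) * (1 - lam))) =
        lam * ((1 - exp (-t) * (t + 1)) / (1 - exp (-t))) +
          lam ^ 3 / (1 - lam) * ((1 - exp (-t) * (t + 1)) / (1 - exp (-t)) ^ 2) := by
    intro t ht
    have := (one_sub_exp_neg_pos ht).ne'
    have : 1 - lam ≠ 0 := by linarith
    field_simp
  intro a ha b hb hab
  simp only [hsplit a ha, hsplit b hb]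
  have hA := strictMonoOn_one_sub_exp_neg_mul_add_one_div ha hb hab
  have hB := strictMonoOn_one_sub_exp_neg_mul_add_one_div_sq ha hb hab
  gcongr
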